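/- Define sequences x_i, y_i of natural numbers by x_1 = 1, y_1 = n-1, and for 2 ≤ i ≤ n-2: x_i = x_{i-1} + y_{i-1}·(n-i), y_i = y_{i-1} + x_{i-1}·(n-i). Then x_{n-2} + y_{n-2} = n!/2 for every n ≥ 3. -/

import Mathlib

/-!
Adding the two recursions shows that `s i = x i + y i` satisfies `s 1 = n` and
`s i = (n - i + 1) * s (i - 1)`, so `s i` is the descending factorial `n (n - 1) ⋯ (n - i + 1)`;
at `i = n - 2` this is `n! / 2!`.
-/

theorem Nat.eq_descFactorial_of_succ {n m : ℕ} {s : ℕ → ℕ} (h1 : s 1 = n)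
    (hsucc : ∀ i, 1 ≤ i → i < m → s (i + 1) = (n - i) * s i) :
    ∀ i, 1 ≤ i → i ≤ m → s i = n.descFactorial i := by
  intro i hi
  induction i, hi using Nat.le_induction with
  | base => intro _; simpa using h1
  | succ k hk ih =>
    intro hkm
    rw [hsucc k hk hkm, ih (Nat.le_of_succ_le hkm), Nat.descFactorial_succ]

/-- If `x 1 = 1`, `y 1 = n - 1` and for `2 ≤ i ≤ n - 2` one has
`x i = x (i-1) + y (i-1) * (n-i)` and `y i = y (i-1) + x (i-1) * (n-i)`, then
`x (n-2) + y (n-2) = n!/2` for every `n ≥ 3`. -/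
theorem pv_rank_xy_recursion (n : ℕ) (hn : 3 ≤ n) (x y : ℕ → ℕ)
    (hx1 : x 1 = 1) (hy1 : y 1 = n - 1)
    (hx : ∀ i, 2 ≤ i → i ≤ n - 2 → x i = x (i - 1) + y (i - 1) * (n - i))
    (hy : ∀ i, 2 ≤ i → i ≤ n - 2 → y i = y (i - 1) + x (i - 1) * (n - i)) :
    x (n - 2) + y (n - 2) = n.factorial / 2 := by
  have hsum1 : x 1 + y 1 = n := by omega
  have hsucc : ∀ i, 1 ≤ i → i < n - 2 → x (i + 1) + y (i + 1) = (n - i) * (x i + y i) := by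
    intro i hi hin
    have hni : n - i = n - (i + 1) + 1 := by omega
    rw [hx (i + 1) (by omega) hin, hy (i + 1) (by omega) hin, Nat.add_sub_cancel, hni]
    ring
  rw [Nat.eq_descFactorial_of_succ (s := fun i => x i + y i) hsum1 hsucc (n - 2) (by omega) le_rfl,
    Nat.descFactorial_eq_div (Nat.sub_le n 2), Nat.sub_sub_self (by omega : 2 ≤ n)]
  rfl
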